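/- arXiv:1908.07664 — 5 statements merged into one kernel-verified Lean document; each statement's English description precedes it below -/
import Mathlib

section
/- Let G be a group with presentation ⟨Y | R⟩, i.e., G is the quotient of the free group F(Y) on a finite set Y by the normal closure of a set of relators R ⊆ F(Y). For S ⊆ Y, let φ_S : F(Y) → F(S) be the homomorphism sending y to y if y ∈ S and y to 1 if y ∉ S, and let ρ_S : G → G_S be the quotient of G by the normal closure of the images of Y ∖ S. If φ_S(R) ⊆ R, then S is retractive in G: the composite of the inclusion ⟨S⟩ ↪ G (the subgroup of G generated by the images of S) with ρ_S : G → G_S is injective. -/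
/-!
The endomorphism `φ_S` of `F(Y)` preserves `R` and kills `Y ∖ S`, so it descends to a
homomorphism `G_S → G`. Precomposed with `ρ_S` it is the endomorphism of `G` induced by `φ_S`,
which fixes every generator in `S` and hence all of `⟨S⟩`: it is a left inverse of `ρ_S`
on `⟨S⟩`.
-/

/-- The canonical surjection between presented groups when the set of relators grows. -/
def quotMap {α : Type*} {R S : Set (FreeGroup α)} (h : R ⊆ S) :
    PresentedGroup R →* PresentedGroup S :=
  QuotientGroup.map _ _ (MonoidHom.id _) (fun _ hx => Subgroup.normalClosure_mono h hx)

namespace PresentedGroup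

variable {α β : Type*} {R : Set (FreeGroup α)} {T : Set (FreeGroup β)}

def mapOfMemNormalClosure (φ : FreeGroup α →* FreeGroup β)
    (h : ∀ r ∈ R, φ r ∈ Subgroup.normalClosure T) : PresentedGroup R →* PresentedGroup T :=
  QuotientGroup.map _ _ φ (Subgroup.normalClosure_le_normal h)

@[simp]
theorem quotMap_of {R' : Set (FreeGroup α)} (hRR' : R ⊆ R') (a : α) :
    quotMap hRR' (of a) = of a :=
  rfl

@[simp]
theorem mapOfMemNormalClosure_of (φ : FreeGroup α →* FreeGroup β)
    (h : ∀ r ∈ R, φ r ∈ Subgroup.normalClosure T) (a : α) :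
    mapOfMemNormalClosure φ h (of a) = mk T (φ (.of a)) :=
  rfl

theorem mapOfMemNormalClosure_comp_quotMap {R' : Set (FreeGroup α)} (hRR' : R ⊆ R')
    (φ : FreeGroup α →* FreeGroup β) (h : ∀ r ∈ R', φ r ∈ Subgroup.normalClosure T) :
    (mapOfMemNormalClosure φ h).comp (quotMap hRR') =
      mapOfMemNormalClosure φ fun r hr => h r (hRR' hr) :=
  ext fun a => by
    rw [MonoidHom.comp_apply, quotMap_of, mapOfMemNormalClosure_of, mapOfMemNormalClosure_of]

end PresentedGroup

open PresentedGroup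

section Retraction

variable {α : Type*} {R : Set (FreeGroup α)} {S : Set α} {φ : FreeGroup α →* FreeGroup α}

theorem apply_mem_normalClosure_union_of_compl
    (hφ_not_mem : ∀ a ∉ S, φ (FreeGroup.of a) = 1) (hφR : φ '' R ⊆ R) :
    ∀ r ∈ R ∪ FreeGroup.of '' Sᶜ, φ r ∈ Subgroup.normalClosure R := by
  rintro r (hr | ⟨a, ha, rfl⟩)
  · exact Subgroup.subset_normalClosure (hφR ⟨r, hr, rfl⟩)
  · rw [hφ_not_mem a ha]
    exact one_mem _

theorem mapOfMemNormalClosure_eqOn_closure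
    (hφ_mem : ∀ a ∈ S, φ (FreeGroup.of a) = FreeGroup.of a)
    (hφR : ∀ r ∈ R, φ r ∈ Subgroup.normalClosure R) :
    Set.EqOn (mapOfMemNormalClosure φ hφR) (MonoidHom.id _)
      (Subgroup.closure (of (rels := R) '' S)) :=
  MonoidHom.eqOn_closure <| by
    rintro _ ⟨a, ha, rfl⟩
    rw [mapOfMemNormalClosure_of, hφ_mem a ha]
    rfl

end Retraction

theorem retractive_of_phi_rels_subset_general {α : Type}
    (R : Set (FreeGroup α)) (S : Set α)
    (φS : FreeGroup α →* FreeGroup α)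
    (hφ_mem : ∀ a : α, a ∈ S → φS (FreeGroup.of a) = FreeGroup.of a)
    (hφ_not_mem : ∀ a : α, a ∉ S → φS (FreeGroup.of a) = 1)
    (hRS : φS '' R ⊆ R) :
    Set.InjOn
      (quotMap (Set.subset_union_left : R ⊆ R ∪ FreeGroup.of '' Sᶜ))
      ((Subgroup.closure ((fun a => (PresentedGroup.of a : PresentedGroup R)) '' S) :
          Subgroup (PresentedGroup R)) : Set (PresentedGroup R)) := by
  let retraction :=
    mapOfMemNormalClosure φS (apply_mem_normalClosure_union_of_compl hφ_not_mem hRS)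
  have hleft : Set.LeftInvOn retraction (quotMap Set.subset_union_left)
      (Subgroup.closure (of (rels := R) '' S)) := fun x hx => by
    rw [← MonoidHom.comp_apply, mapOfMemNormalClosure_comp_quotMap]
    exact mapOfMemNormalClosure_eqOn_closure hφ_mem _ hx
  exact hleft.injOn

/-- Let `G = ⟨Y ∣ R⟩` be a finitely generated presented group, `S ⊆ Y`, and
let `φ_S : F(Y) → F(Y)` be the homomorphism sending `y ↦ y` for `y ∈ S` and `y ↦ 1` for
`y ∉ S` (its image lies in `F(S) ≤ F(Y)`).  If `φ_S(R) ⊆ R`, then `S` is retractive in `G`: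
the composite of the inclusion `⟨S⟩ ↪ G` with the quotient map `ρ_S : G → G_S` (killing the
generators outside `S`) is injective. -/
theorem retractive_of_phi_rels_subset {α : Type} [Finite α]
    (R : Set (FreeGroup α)) (S : Set α)
    (φS : FreeGroup α →* FreeGroup α)
    (hφ_mem : ∀ a : α, a ∈ S → φS (FreeGroup.of a) = FreeGroup.of a)
    (hφ_not_mem : ∀ a : α, a ∉ S → φS (FreeGroup.of a) = 1)
    (hRS : φS '' R ⊆ R) :
    Set.InjOn
      (quotMap (Set.subset_union_left : R ⊆ R ∪ FreeGroup.of '' Sᶜ))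
      ((Subgroup.closure ((fun a => (PresentedGroup.of a : PresentedGroup R)) '' S) :
          Subgroup (PresentedGroup R)) : Set (PresentedGroup R)) :=
  retractive_of_phi_rels_subset_general R S φS hφ_mem hφ_not_mem hRS
end

section
/- Let G be a group that is an internal semidirect product G = G₂ ⋊ G₁, i.e., G₂ is a normal subgroup of G, G₁ is a subgroup of G, G₁ ∩ G₂ = {1}, and G₁G₂ = G. Suppose Y = Y₁ ∪ Y₂ is a generating set for G with Y₁ ⊆ G₁ and Y₂ ⊆ G₂. Then Y₁ is retractive: the composite of the inclusion ⟨Y₁⟩ ↪ G with the quotient map ρ_{Y₁} : G → G_{Y₁} is injective. -/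
/-- If `G = G₂ ⋊ G₁` is an internal semidirect product and `Y = Y₁ ∪ Y₂` is a
generating set of `G` with `Y₁ ⊆ G₁` and `Y₂ ⊆ G₂`, then `Y₁` is retractive: the composite of
the inclusion `⟨Y₁⟩ ↪ G` with the quotient map `ρ_{Y₁} : G → G_{Y₁}` (the quotient of `G` by
the normal closure of `Y ∖ Y₁`) is injective. -/
theorem semidirect_retractive {G : Type*} [Group G] (G₁ G₂ : Subgroup G) [G₂.Normal]
    (hdisj : G₁ ⊓ G₂ = ⊥)
    (hprod : ∀ g : G, ∃ g₂ ∈ G₂, ∃ g₁ ∈ G₁, g = g₂ * g₁)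
    (Y₁ Y₂ : Set G) (hY₁ : Y₁ ⊆ (G₁ : Set G)) (hY₂ : Y₂ ⊆ (G₂ : Set G))
    (hgen : Subgroup.closure (Y₁ ∪ Y₂) = ⊤) :
    Set.InjOn
      (QuotientGroup.mk' (Subgroup.normalClosure ((Y₁ ∪ Y₂) \ Y₁)))
      ((Subgroup.closure Y₁ : Subgroup G) : Set G) := by
  intro x hx y hy hxy
  have hN : Subgroup.normalClosure ((Y₁ ∪ Y₂) \ Y₁) ≤ G₂ := by
    apply Subgroup.normalClosure_le_normal
    intro z hz
    rcases hz with ⟨hz1, hz2⟩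
    rcases hz1 with h | h
    · exact absurd h hz2
    · exact hY₂ h
  have hC : (Subgroup.closure Y₁ : Subgroup G) ≤ G₁ :=
    (Subgroup.closure_le _).mpr hY₁
  rw [QuotientGroup.mk'_eq_mk'] at hxy
  obtain ⟨z, hz, hzz⟩ := hxy
  have hmem : x⁻¹ * y ∈ Subgroup.normalClosure ((Y₁ ∪ Y₂) \ Y₁) := by
    have : x⁻¹ * y = z := by rw [← hzz]; group
    rwa [this]
  have h1 : x⁻¹ * y ∈ G₁ := hC (mul_mem (inv_mem hx) hy)
  have h2 : x⁻¹ * y ∈ G₂ := hN hmem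
  have : x⁻¹ * y ∈ G₁ ⊓ G₂ := ⟨h1, h2⟩
  rw [hdisj, Subgroup.mem_bot] at this
  exact (inv_mul_eq_one.mp this)
end

section
/- Let Γ be a finite simple graph with vertex set V = {1, …, n}. Suppose {i,j} and {r,s} are edges of Γ such that no clique of Γ contains {i,j} ∪ {r,s} (equivalently, the pair {a_{ij}, a_{rs}} is transverse to the family 𝒳(Γ) of maximal cliques). Then [a_{ij}, a_{rs}] = 1 in P_Γ. -/
/-!
Since `{i, j, r, s}` is not a clique, some cross pair `{p, q}` (`p ∈ {i, j}`, `q ∈ {r, s}`) is a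
non-edge, so `a_{pq} = 1` in `P_Γ`. Up to swapping the two edges, the pairs are either unlinked
(disjoint or nested), where an Artin relation says they commute; or share an endpoint, where the
relation `[a_{ij} a_{ir}, a_{jr}] = [a_{ij}, a_{ir} a_{jr}] = 1` with its trivial factor deleted is
the claim; or are linked, `w < x < y < z` with edges `{w, y}`, `{x, z}`. In the linked case
`a_{xz}` commutes with `a_{yz} a_{wy} a_{yz}⁻¹ = a_{wz}⁻¹ a_{wy} a_{wz}`, so it suffices that
`a_{xz}` commute with `a_{yz}` or with `a_{wz}`, and each of the four possible trivial cross
generators provides one of these.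
-/

abbrev PBIdx (n : ℕ) : Type := {p : Fin n × Fin n // p.1 < p.2}

namespace GraphicBraid

open scoped commutatorElement

def ofIdx {n : ℕ} {i j : Fin n} (h : i < j) : FreeGroup (PBIdx n) :=
  FreeGroup.of ⟨(i, j), h⟩

/-- The Artin relators for the pure braid group `P_n`. -/
def pureBraidRels (n : ℕ) : Set (FreeGroup (PBIdx n)) :=
  {w | ∃ (i j r s : Fin n) (hij : i < j) (hrs : r < s),
      (s < i ∨ (i < r ∧ s < j)) ∧ w = ⁅ofIdx hij, ofIdx hrs⁆} ∪
  {w | ∃ (r i s j : Fin n) (hri : r < i) (his : i < s) (hsj : s < j),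
      w = ⁅ofIdx (his.trans hsj), ofIdx hsj * ofIdx (hri.trans his) * (ofIdx hsj)⁻¹⁆} ∪
  {w | ∃ (i j r : Fin n) (hij : i < j) (hjr : j < r),
      w = ⁅ofIdx hij * ofIdx (hij.trans hjr), ofIdx hjr⁆ ∨
      w = ⁅ofIdx hij, ofIdx (hij.trans hjr) * ofIdx hjr⁆}

/-- Relators killing the generators corresponding to non-edges of `Γ`. -/
def nonEdgeRels {n : ℕ} (Γ : SimpleGraph (Fin n)) : Set (FreeGroup (PBIdx n)) :=
  {w | ∃ p : PBIdx n, ¬ Γ.Adj p.1.1 p.1.2 ∧ w = FreeGroup.of p}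

def graphicRels {n : ℕ} (Γ : SimpleGraph (Fin n)) : Set (FreeGroup (PBIdx n)) :=
  pureBraidRels n ∪ nonEdgeRels Γ

/-- The graphic pure braid group `P_Γ`. -/
abbrev GPB {n : ℕ} (Γ : SimpleGraph (Fin n)) : Type := PresentedGroup (graphicRels Γ)

/-- The image of the Artin generator `a_{ij}` in `P_Γ`. -/
def agen {n : ℕ} (Γ : SimpleGraph (Fin n)) {i j : Fin n} (h : i < j) : GPB Γ :=
  PresentedGroup.of (rels := graphicRels Γ) ⟨(i, j), h⟩

/-- Relators killing the generators `a_{ij}` with `{i,j} ⊄ X`. -/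
def killRels {n : ℕ} (X : Set (Fin n)) : Set (FreeGroup (PBIdx n)) :=
  {w | ∃ p : PBIdx n, ¬ (p.1.1 ∈ X ∧ p.1.2 ∈ X) ∧ w = FreeGroup.of p}

/-- The quotient `P_X` of `P_Γ` obtained by killing all generators `a_{ij}` with `{i,j} ⊄ X`. -/
abbrev GPBX {n : ℕ} (Γ : SimpleGraph (Fin n)) (X : Set (Fin n)) : Type :=
  PresentedGroup (graphicRels Γ ∪ killRels X)

/-- The canonical surjection between presented groups when the set of relators grows. -/
def quotMap {α : Type*} {R S : Set (FreeGroup α)} (h : R ⊆ S) :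
    PresentedGroup R →* PresentedGroup S :=
  QuotientGroup.map _ _ (MonoidHom.id _)
    (fun _ hx => Subgroup.normalClosure_mono h hx)

/-- The quotient map `ρ_X : P_Γ → P_X`. -/
def rho {n : ℕ} (Γ : SimpleGraph (Fin n)) (X : Set (Fin n)) : GPB Γ →* GPBX Γ X :=
  quotMap Set.subset_union_left

lemma killRels_anti {n : ℕ} {X Y : Set (Fin n)} (h : X ⊆ Y) : killRels Y ⊆ killRels X := by
  rintro w ⟨p, hp, rfl⟩
  exact ⟨p, fun hx => hp ⟨h hx.1, h hx.2⟩, rfl⟩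

/-- The quotient map `P_Y → P_X` for `X ⊆ Y`. -/
def rhoDown {n : ℕ} (Γ : SimpleGraph (Fin n)) {X Y : Set (Fin n)} (h : X ⊆ Y) :
    GPBX Γ Y →* GPBX Γ X :=
  quotMap (Set.union_subset_union_right _ (killRels_anti h))

/-- `X` is a maximal clique of `Γ`. -/
def MaxClique {n : ℕ} (Γ : SimpleGraph (Fin n)) (X : Set (Fin n)) : Prop :=
  Γ.IsClique X ∧ ∀ Y : Set (Fin n), Γ.IsClique Y → X ⊆ Y → Y = X


/-- The subgroup of `P_Γ` generated by the generators `a_{ij}` with `{i,j} ⊆ X`. -/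
def cliqueSubgroup {n : ℕ} (Γ : SimpleGraph (Fin n)) (X : Set (Fin n)) : Subgroup (GPB Γ) :=
  Subgroup.closure {g : GPB Γ | ∃ p : PBIdx n, (p.1.1 ∈ X ∧ p.1.2 ∈ X) ∧ g = PresentedGroup.of p}

/-- The bipartite incidence graph of edges and 3-cliques (triangles) of `Γ`. -/
def incidenceGraph {n : ℕ} (Γ : SimpleGraph (Fin n)) :
    SimpleGraph (Γ.edgeSet ⊕ {T : Finset (Fin n) // Γ.IsNClique 3 T}) where
  Adj x y :=
    match x, y with
    | Sum.inl e, Sum.inr T => ∀ v : Fin n, v ∈ (e : Sym2 (Fin n)) → v ∈ T.1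
    | Sum.inr T, Sum.inl e => ∀ v : Fin n, v ∈ (e : Sym2 (Fin n)) → v ∈ T.1
    | _, _ => False
  symm := ⟨by rintro (e | T) (f | S) h <;> exact h⟩
  loopless := ⟨by rintro (e | T) h <;> exact h⟩

end GraphicBraid

theorem SimpleGraph.isClique_of_cross {V : Type*} {G : SimpleGraph V} {i j r s : V}
    (eij : G.Adj i j) (ers : G.Adj r s) (hir : i ≠ r → G.Adj i r) (his : i ≠ s → G.Adj i s)
    (hjr : j ≠ r → G.Adj j r) (hjs : j ≠ s → G.Adj j s) : G.IsClique {i, j, r, s} := by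
  simp only [SimpleGraph.isClique_insert, SimpleGraph.isClique_singleton, Set.mem_insert_iff,
    Set.mem_singleton_iff, true_and]
  refine ⟨⟨?_, ?_⟩, ?_⟩
  · rintro b rfl -
    exact ers
  · rintro b (rfl | rfl) hjb
    exacts [hjr hjb, hjs hjb]
  · rintro b (rfl | rfl | rfl) hib
    exacts [eij, hir hib, his hib]

theorem Commute.of_conj_right {G : Type*} [Group G] {a b c : G}
    (hconj : Commute a (c * b * c⁻¹)) (hc : Commute a c) : Commute a b := by
  rwa [← Commute.conj_iff c, hc.symm.eq, mul_inv_cancel_right]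

namespace GraphicBraid

open scoped commutatorElement

section

variable {n : ℕ} (Γ : SimpleGraph (Fin n))

theorem agen_eq_one_of_not_adj {i j : Fin n} (h : i < j) (hadj : ¬ Γ.Adj i j) :
    agen Γ h = 1 :=
  PresentedGroup.one_of_mem (Or.inr ⟨⟨(i, j), h⟩, hadj, rfl⟩)

theorem adj_of_agen_ne_one {i j : Fin n} {h : i < j} (hne : agen Γ h ≠ 1) : Γ.Adj i j :=
  of_not_not fun hadj => hne (agen_eq_one_of_not_adj Γ h hadj)

theorem commute_of_mem_graphicRels {a b : FreeGroup (PBIdx n)} (h : ⁅a, b⁆ ∈ graphicRels Γ) :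
    Commute (PresentedGroup.mk (graphicRels Γ) a) (PresentedGroup.mk (graphicRels Γ) b) := by
  rw [← commutatorElement_eq_one_iff_commute, ← map_commutatorElement]
  exact PresentedGroup.one_of_mem h

theorem commute_agen_of_unlinked {i j r s : Fin n} (hij : i < j) (hrs : r < s)
    (h : s < i ∨ i < r ∧ s < j) : Commute (agen Γ hij) (agen Γ hrs) :=
  commute_of_mem_graphicRels Γ (Or.inl (Or.inl (Or.inl ⟨i, j, r, s, hij, hrs, h, rfl⟩)))

theorem commute_agen_conj {r i s j : Fin n} (hri : r < i) (his : i < s) (hsj : s < j) :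
    Commute (agen Γ (his.trans hsj)) (agen Γ hsj * agen Γ (hri.trans his) * (agen Γ hsj)⁻¹) :=
  commute_of_mem_graphicRels Γ (Or.inl (Or.inl (Or.inr ⟨r, i, s, j, hri, his, hsj, rfl⟩)))

theorem commute_agen_mul_agen_left {i j r : Fin n} (hij : i < j) (hjr : j < r) :
    Commute (agen Γ hij * agen Γ (hij.trans hjr)) (agen Γ hjr) :=
  commute_of_mem_graphicRels Γ (Or.inl (Or.inr ⟨i, j, r, hij, hjr, Or.inl rfl⟩))

theorem commute_agen_mul_agen_right {i j r : Fin n} (hij : i < j) (hjr : j < r) :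
    Commute (agen Γ hij) (agen Γ (hij.trans hjr) * agen Γ hjr) :=
  commute_of_mem_graphicRels Γ (Or.inl (Or.inr ⟨i, j, r, hij, hjr, Or.inr rfl⟩))

theorem agen_conj_eq {i j r : Fin n} (hij : i < j) (hjr : j < r) :
    agen Γ hjr * agen Γ hij * (agen Γ hjr)⁻¹ =
      (agen Γ (hij.trans hjr))⁻¹ * agen Γ hij * agen Γ (hij.trans hjr) := by
  have h := (commute_agen_mul_agen_right Γ hij hjr).eq
  calc agen Γ hjr * agen Γ hij * (agen Γ hjr)⁻¹
      = (agen Γ (hij.trans hjr))⁻¹ * (agen Γ (hij.trans hjr) * agen Γ hjr * agen Γ hij) *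
          (agen Γ hjr)⁻¹ := by group
    _ = (agen Γ (hij.trans hjr))⁻¹ * (agen Γ hij * (agen Γ (hij.trans hjr) * agen Γ hjr)) *
          (agen Γ hjr)⁻¹ := by rw [h]
    _ = (agen Γ (hij.trans hjr))⁻¹ * agen Γ hij * agen Γ (hij.trans hjr) := by group

theorem commute_agen_linked {w x y z : Fin n} (hwx : w < x) (hxy : x < y) (hyz : y < z)
    (h : agen Γ hwx = 1 ∨ agen Γ (hwx.trans (hxy.trans hyz)) = 1 ∨
      agen Γ hxy = 1 ∨ agen Γ hyz = 1) :
    Commute (agen Γ (hxy.trans hyz)) (agen Γ (hwx.trans hxy)) := by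
  have hconj := commute_agen_conj Γ hwx hxy hyz
  have hconj_wz := hconj
  rw [agen_conj_eq Γ (hwx.trans hxy) hyz] at hconj_wz
  rcases h with hwx1 | hwz1 | hxy1 | hyz1
  · have hwz := commute_agen_mul_agen_left Γ hwx (hxy.trans hyz)
    rw [hwx1, one_mul] at hwz
    exact hconj_wz.of_conj_right (by simpa using hwz.symm.inv_right)
  · simpa [hwz1] using hconj_wz
  · have hyz := commute_agen_mul_agen_left Γ hxy hyz
    rw [hxy1, one_mul] at hyz
    exact hconj.of_conj_right hyz
  · simpa [hyz1] using hconj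

theorem commute_agen_of_lex_lt {i j r s : Fin n} (hij : i < j) (hrs : r < s)
    (eij : Γ.Adj i j) (ers : Γ.Adj r s) (hlt : i < r ∨ i = r ∧ j < s)
    (hnc : ¬ Γ.IsClique ({i, j, r, s} : Set (Fin n))) :
    Commute (agen Γ hij) (agen Γ hrs) := by
  rcases hlt with hir | ⟨rfl, hjs⟩
  · rcases lt_trichotomy j r with hjr | rfl | hrj
    · exact (commute_agen_of_unlinked Γ hrs hij (Or.inl hjr)).symm
    · have his : agen Γ (hij.trans hrs) = 1 := agen_eq_one_of_not_adj Γ _ fun h =>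
        hnc (SimpleGraph.isClique_of_cross eij ers (fun _ => eij) (fun _ => h) (absurd rfl)
          (fun _ => ers))
      simpa [his] using commute_agen_mul_agen_right Γ hij hrs
    · rcases lt_trichotomy s j with hsj | rfl | hjs
      · exact commute_agen_of_unlinked Γ hij hrs (Or.inr ⟨hir, hsj⟩)
      · have hir1 : agen Γ hir = 1 := agen_eq_one_of_not_adj Γ _ fun h =>
          hnc (SimpleGraph.isClique_of_cross eij ers (fun _ => h) (fun _ => eij)
            (fun _ => ers.symm) (absurd rfl))
        simpa [hir1] using commute_agen_mul_agen_left Γ hir hrs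
      · refine (commute_agen_linked Γ hir hrj hjs ?_).symm
        by_contra! h
        obtain ⟨hir1, his1, hrj1, hjs1⟩ := h
        exact hnc (SimpleGraph.isClique_of_cross eij ers (fun _ => adj_of_agen_ne_one Γ hir1)
          (fun _ => adj_of_agen_ne_one Γ his1) (fun _ => (adj_of_agen_ne_one Γ hrj1).symm)
          (fun _ => adj_of_agen_ne_one Γ hjs1))
  · have hjs1 : agen Γ hjs = 1 := agen_eq_one_of_not_adj Γ _ fun h =>
      hnc (SimpleGraph.isClique_of_cross eij ers (absurd rfl) (fun _ => ers) (fun _ => eij.symm)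
        (fun _ => h))
    simpa [hjs1] using commute_agen_mul_agen_right Γ hij hjs

end

/-- If `{i,j}` and `{r,s}` are edges of `Γ` such that no clique of `Γ`
contains `{i,j} ∪ {r,s}`, then `[a_{ij}, a_{rs}] = 1` in `P_Γ`. -/
theorem transverse_commute {n : ℕ} (Γ : SimpleGraph (Fin n)) {i j r s : Fin n}
    (hij : i < j) (hrs : r < s) (eij : Γ.Adj i j) (ers : Γ.Adj r s)
    (htrans : ∀ C : Set (Fin n), Γ.IsClique C → ¬ (({i, j, r, s} : Set (Fin n)) ⊆ C)) :
    ⁅agen Γ hij, agen Γ hrs⁆ = 1 := by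
  have hnc : ¬ Γ.IsClique ({i, j, r, s} : Set (Fin n)) := fun h => htrans _ h subset_rfl
  rw [commutatorElement_eq_one_iff_commute]
  rcases lt_trichotomy (toLex (i, j)) (toLex (r, s)) with hlt | heq | hgt
  · exact commute_agen_of_lex_lt Γ hij hrs eij ers (Prod.Lex.toLex_lt_toLex.mp hlt) hnc
  · obtain ⟨rfl, rfl⟩ := Prod.mk.inj (toLex_inj.mp heq)
    rfl
  · have hswap : ({r, s, i, j} : Set (Fin n)) = {i, j, r, s} := by
      rw [Set.insert_comm s, Set.insert_comm r, Set.pair_comm s, Set.insert_comm r]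
    refine (commute_agen_of_lex_lt Γ hrs hij ers eij (Prod.Lex.toLex_lt_toLex.mp hgt) ?_).symm
    rwa [hswap]

end GraphicBraid
end

section
/- Let Γ be a finite simple graph with vertex set V = {1, …, n}, let X = {i, j, k} be a 3-clique of Γ, and let H be the subgroup of P_Γ generated by the three elements a_{ij}, a_{ik}, a_{jk}. If g ∈ P_Γ commutes with at least two of the three elements a_{ij}, a_{ik}, a_{jk}, then g commutes with every element of the commutator subgroup [H, H]. -/
section CentralElement

open scoped commutatorElement

variable {G : Type*} [Group G]

theorem Commute.commutatorElement_right {x a b : G} (ha : Commute x a) (hb : Commute x b) :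
    Commute x ⁅a, b⁆ := by
  rw [commutatorElement_def]
  exact ((ha.mul_right hb).mul_right ha.inv_right).mul_right hb.inv_right

theorem commutatorElement_mul_left_of_commute {x a b : G} (ha : Commute x a) (hb : Commute x b) :
    ⁅x * a, b⁆ = ⁅a, b⁆ := by
  rw [commutatorElement_mul_left_eq_conj_mul, (ha.commutatorElement_right hb).eq,
    hb.commutator_eq, mul_one, mul_inv_cancel_right]

theorem commutatorElement_mul_right_of_commute {x a b : G} (ha : Commute x a) (hb : Commute x b) :
    ⁅a, x * b⁆ = ⁅a, b⁆ := by
  rw [← commutatorElement_inv, commutatorElement_mul_left_of_commute hb ha, commutatorElement_inv]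

namespace Subgroup

theorem commute_of_mem_closure {z w : G} {s : Set G} (hs : ∀ y ∈ s, Commute z y)
    (hw : w ∈ closure s) : Commute z w :=
  have hle : closure s ≤ centralizer {z} :=
    (closure_le _).2 fun y hy => mem_centralizer_singleton_iff.2 (hs y hy).eq.symm
  (mem_centralizer_singleton_iff.1 (hle hw)).symm

theorem exists_zpow_mul_of_mem_closure_insert {z x : G} {s : Set G}
    (hs : ∀ y ∈ s, Commute z y) (hx : x ∈ closure (insert z s)) :
    ∃ m : ℤ, ∃ w ∈ closure s, x = z ^ m * w := by
  have hzs : ∀ w ∈ closure s, Commute z w := fun _ => commute_of_mem_closure hs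
  induction hx using closure_induction with
  | mem x hx =>
    rcases hx with rfl | hx
    · exact ⟨1, 1, one_mem _, by simp⟩
    · exact ⟨0, x, subset_closure hx, by simp⟩
  | one => exact ⟨0, 1, one_mem _, by simp⟩
  | mul x y _ _ hx hy =>
    obtain ⟨m, w, hw, rfl⟩ := hx
    obtain ⟨l, w', hw', rfl⟩ := hy
    refine ⟨m + l, w * w', mul_mem hw hw', ?_⟩
    rw [zpow_add, mul_assoc, ← mul_assoc w, ← ((hzs w hw).zpow_left l).eq]
    group
  | inv _ _ hx =>
    obtain ⟨m, w, hw, rfl⟩ := hx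
    refine ⟨-m, w⁻¹, inv_mem hw, ?_⟩
    rw [mul_inv_rev, zpow_neg, ((hzs w hw).zpow_left m).inv_inv.eq]

theorem commutator_closure_insert_le {z : G} {s : Set G} (hs : ∀ y ∈ s, Commute z y) :
    ⁅closure (insert z s), closure (insert z s)⁆ ≤ ⁅closure s, closure s⁆ := by
  have hzs : ∀ w ∈ closure s, Commute z w := fun _ => commute_of_mem_closure hs
  rw [commutator_le]
  intro x hx y hy
  obtain ⟨m, w, hw, rfl⟩ := exists_zpow_mul_of_mem_closure_insert hs hx
  obtain ⟨l, w', hw', rfl⟩ := exists_zpow_mul_of_mem_closure_insert hs hy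
  rw [commutatorElement_mul_left_of_commute ((hzs w hw).zpow_left m)
      (((Commute.refl z).zpow_zpow m l).mul_right ((hzs w' hw').zpow_left m)),
    commutatorElement_mul_right_of_commute ((hzs w hw).zpow_left l) ((hzs w' hw').zpow_left l)]
  exact commutator_mem_commutator hw hw'

theorem commute_of_mem_commutator_of_le_closure_insert {g z : G} {s : Set G} {H : Subgroup G}
    (hH : H ≤ closure (insert z s)) (hz : ∀ y ∈ s, Commute z y) (hg : ∀ y ∈ s, Commute g y) :
    ∀ x ∈ ⁅H, H⁆, Commute g x := by
  have hle : ⁅H, H⁆ ≤ closure s :=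
    calc ⁅H, H⁆ ≤ ⁅closure (insert z s), closure (insert z s)⁆ := commutator_mono hH hH
      _ ≤ ⁅closure s, closure s⁆ := commutator_closure_insert_le hz
      _ ≤ closure s ⊔ closure s := commutator_le_sup _ _
      _ = closure s := sup_idem _
  exact fun x hx => commute_of_mem_closure hg (hle hx)

theorem closure_le_closure_insert_mul_mul (a b c : G) :
    closure {a, b, c} ≤ closure {a * b * c, a, b} ∧
    closure {a, b, c} ≤ closure {a * b * c, a, c} ∧
    closure {a, b, c} ≤ closure {a * b * c, b, c} := by
  have hz {u v : G} : a * b * c ∈ closure {a * b * c, u, v} := mem_closure_of_mem (by simp)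
  have hu {u v : G} : u ∈ closure {a * b * c, u, v} := mem_closure_of_mem (by simp)
  have hv {u v : G} : v ∈ closure {a * b * c, u, v} := mem_closure_of_mem (by simp)
  refine ⟨closure_le _ |>.2 ?_, closure_le _ |>.2 ?_, closure_le _ |>.2 ?_⟩ <;>
    simp only [Set.insert_subset_iff, Set.singleton_subset_iff, SetLike.mem_coe]
  · exact ⟨hu, hv, (mul_mem_cancel_left (mul_mem hu hv)).1 hz⟩
  · exact ⟨hu, (mul_mem_cancel_left hu).1 ((mul_mem_cancel_right hv).1 hz), hv⟩
  · exact ⟨(mul_mem_cancel_right (mul_mem hu hv)).1 (mul_assoc a b c ▸ hz), hu, hv⟩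

end Subgroup

theorem commute_mul_mul_of_commute {a b c : G} (hab_c : Commute (a * b) c)
    (ha_bc : Commute a (b * c)) :
    Commute (a * b * c) a ∧ Commute (a * b * c) b ∧ Commute (a * b * c) c := by
  have hza : Commute (a * b * c) a := mul_assoc a b c ▸ (Commute.refl a).mul_left ha_bc.symm
  have hzc : Commute (a * b * c) c := hab_c.mul_left (Commute.refl c)
  refine ⟨hza, ?_, hzc⟩
  have hb : b = a⁻¹ * (a * b * c) * c⁻¹ := by group
  conv_rhs => rw [hb]
  exact (hza.inv_right.mul_right (Commute.refl _)).mul_right hzc.inv_right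

end CentralElement

namespace GraphicBraid

open scoped commutatorElement

theorem agen_mul_agen_commute_agen {n : ℕ} (Γ : SimpleGraph (Fin n)) {i j k : Fin n}
    (hij : i < j) (hjk : j < k) :
    Commute (agen Γ hij * agen Γ (hij.trans hjk)) (agen Γ hjk) :=
  commutatorElement_eq_one_iff_commute.1 <|
    PresentedGroup.one_of_mem (Or.inl (Or.inr ⟨i, j, k, hij, hjk, Or.inl rfl⟩))

theorem agen_commute_agen_mul_agen {n : ℕ} (Γ : SimpleGraph (Fin n)) {i j k : Fin n}
    (hij : i < j) (hjk : j < k) :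
    Commute (agen Γ hij) (agen Γ (hij.trans hjk) * agen Γ hjk) :=
  commutatorElement_eq_one_iff_commute.1 <|
    PresentedGroup.one_of_mem (Or.inl (Or.inr ⟨i, j, k, hij, hjk, Or.inr rfl⟩))

theorem two_of_three_commute_general {n : ℕ} (Γ : SimpleGraph (Fin n)) {i j k : Fin n}
    (hij : i < j) (hjk : j < k)
    (g : GPB Γ)
    (hcomm : (Commute g (agen Γ hij) ∧ Commute g (agen Γ (hij.trans hjk))) ∨
             (Commute g (agen Γ hij) ∧ Commute g (agen Γ hjk)) ∨
             (Commute g (agen Γ (hij.trans hjk)) ∧ Commute g (agen Γ hjk))) :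
    ∀ x ∈ ⁅Subgroup.closure {agen Γ hij, agen Γ (hij.trans hjk), agen Γ hjk},
           Subgroup.closure {agen Γ hij, agen Γ (hij.trans hjk), agen Γ hjk}⁆,
      Commute g x := by
  obtain ⟨hza, hzb, hzc⟩ := commute_mul_mul_of_commute
    (agen_mul_agen_commute_agen Γ hij hjk) (agen_commute_agen_mul_agen Γ hij hjk)
  obtain ⟨hab, hac, hbc⟩ := Subgroup.closure_le_closure_insert_mul_mul
    (agen Γ hij) (agen Γ (hij.trans hjk)) (agen Γ hjk)
  rcases hcomm with ⟨hg₁, hg₂⟩ | ⟨hg₁, hg₂⟩ | ⟨hg₁, hg₂⟩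
  · exact Subgroup.commute_of_mem_commutator_of_le_closure_insert hab
      (by simp [hza, hzb]) (by simp [hg₁, hg₂])
  · exact Subgroup.commute_of_mem_commutator_of_le_closure_insert hac
      (by simp [hza, hzc]) (by simp [hg₁, hg₂])
  · exact Subgroup.commute_of_mem_commutator_of_le_closure_insert hbc
      (by simp [hzb, hzc]) (by simp [hg₁, hg₂])

/-- If `X = {i,j,k}` is a `3`-clique of `Γ` and `g ∈ P_Γ` commutes with at
least two of the three generators `a_{ij}, a_{ik}, a_{jk}`, then `g` commutes with every element
of the commutator subgroup `[H, H]`, where `H = ⟨a_{ij}, a_{ik}, a_{jk}⟩`. -/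
theorem two_of_three_commute {n : ℕ} (Γ : SimpleGraph (Fin n)) {i j k : Fin n}
    (hij : i < j) (hjk : j < k)
    (eij : Γ.Adj i j) (eik : Γ.Adj i k) (ejk : Γ.Adj j k)
    (g : GPB Γ)
    (hcomm : (Commute g (agen Γ hij) ∧ Commute g (agen Γ (hij.trans hjk))) ∨
             (Commute g (agen Γ hij) ∧ Commute g (agen Γ hjk)) ∨
             (Commute g (agen Γ (hij.trans hjk)) ∧ Commute g (agen Γ hjk))) :
    ∀ x ∈ ⁅Subgroup.closure {agen Γ hij, agen Γ (hij.trans hjk), agen Γ hjk},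
           Subgroup.closure {agen Γ hij, agen Γ (hij.trans hjk), agen Γ hjk}⁆,
      Commute g x :=
  two_of_three_commute_general Γ hij hjk g hcomm

end GraphicBraid
end

section
/- Let Γ be a finite simple graph with vertex set V = {1, …, n} and edge set E_Γ, let B_n be the braid group, p : B_n → S_n the homomorphism with σ_i ↦ (i, i+1), P_n = ker p the pure braid group with Artin generators a_{ij}, and Aut(Γ) ≤ S_n the subgroup of permutations 𝔰 with {𝔰(i), 𝔰(j)} ∈ E_Γ for all {i,j} ∈ E_Γ. Let N be the normal closure in P_n of {a_{ij} : {i,j} ∉ E_Γ}. Then N is a normal subgroup of B̃_Γ = p^{-1}(Aut(Γ)): for every σ ∈ B_n with p(σ) ∈ Aut(Γ) and every g ∈ N, σ g σ^{-1} ∈ N. -/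
/-!
Conjugation by a braid `σ` permutes the Artin generators up to conjugation in `P_n`:
`σ a_{ij} σ⁻¹` is `P_n`-conjugate to `a_{p(σ) i, p(σ) j}`. Since `P_n` is normal, the braids with
this property form a subgroup, so it suffices to treat the generators `σ_k`, where it is a case
analysis on the position of `k, k+1` relative to `i, j` using the braid relations. A permutation
preserving the edges of the finite graph `Γ` also preserves its non-edges, so such a `σ` maps
the generators of `N` into `N`.
-/

namespace GraphicBraid

open scoped commutatorElement

/-- The braid relators: `σᵢσⱼσᵢ(σⱼσᵢσⱼ)⁻¹` for `j = i+1` and `⁅σᵢ,σⱼ⁆` for `|i-j| ≥ 2`. -/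
def braidRels (n : ℕ) : Set (FreeGroup (Fin (n - 1))) :=
  {w | ∃ i j : Fin (n - 1), (i : ℕ) + 1 = (j : ℕ) ∧
      w = FreeGroup.of i * FreeGroup.of j * FreeGroup.of i *
        (FreeGroup.of j * FreeGroup.of i * FreeGroup.of j)⁻¹} ∪
  {w | ∃ i j : Fin (n - 1), ((i : ℕ) + 2 ≤ (j : ℕ) ∨ (j : ℕ) + 2 ≤ (i : ℕ)) ∧
      w = ⁅FreeGroup.of i, FreeGroup.of j⁆}

/-- The braid group `B_n`, presented with generators `σ₁, …, σ_{n-1}`. -/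
abbrev BraidGroup (n : ℕ) : Type := PresentedGroup (braidRels n)

/-- The transposition `(k, k+1)` associated to the braid generator `σ_k`. -/
def swapGen (n : ℕ) (k : Fin (n - 1)) : Equiv.Perm (Fin n) :=
  Equiv.swap ⟨(k : ℕ), lt_of_lt_of_le k.2 (Nat.sub_le n 1)⟩ ⟨(k : ℕ) + 1, by have := k.2; omega⟩

lemma braid_swap_rel {α : Type*} [DecidableEq α] {a b c : α} (hab : a ≠ b) (hbc : b ≠ c)
    (hac : a ≠ c) :
    Equiv.swap a b * Equiv.swap b c * Equiv.swap a b *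
      (Equiv.swap b c * Equiv.swap a b * Equiv.swap b c)⁻¹ = 1 := by
  rw [mul_inv_eq_one]
  have h1 : Equiv.swap b c * Equiv.swap a b * Equiv.swap b c = Equiv.swap c a :=
    Equiv.swap_mul_swap_mul_swap hab hac
  have h2 : Equiv.swap a b * Equiv.swap b c * Equiv.swap a b = Equiv.swap a c := by
    rw [Equiv.swap_comm a b, Equiv.swap_comm b c]
    exact Equiv.swap_mul_swap_mul_swap hbc.symm hac.symm
  rw [h1, h2, Equiv.swap_comm]

lemma swap_commute_of_ne {α : Type*} [DecidableEq α] {a b c d : α}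
    (h1 : a ≠ c) (h2 : a ≠ d) (h3 : b ≠ c) (h4 : b ≠ d) :
    Commute (Equiv.swap a b) (Equiv.swap c d) := by
  apply Equiv.Perm.Disjoint.commute
  intro x
  by_cases hxa : x = a
  · subst hxa; right; exact Equiv.swap_apply_of_ne_of_ne h1 h2
  by_cases hxb : x = b
  · subst hxb; right; exact Equiv.swap_apply_of_ne_of_ne h3 h4
  · left; exact Equiv.swap_apply_of_ne_of_ne hxa hxb

lemma swapGen_rels (n : ℕ) : ∀ r ∈ braidRels n, FreeGroup.lift (swapGen n) r = 1 := by
  rintro r (⟨i, j, hij, rfl⟩ | ⟨i, j, hij, rfl⟩)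
  · have hj2 : (j : ℕ) < n - 1 := j.2
    have hi2 : (i : ℕ) < n - 1 := i.2
    have e2 : swapGen n j =
        Equiv.swap ⟨(i : ℕ) + 1, by omega⟩ ⟨(i : ℕ) + 2, by omega⟩ := by
      unfold swapGen
      congr 1 <;> exact Fin.mk_eq_mk.mpr (by omega)
    simp only [map_mul, map_inv, FreeGroup.lift_apply_of]
    rw [show swapGen n i =
        Equiv.swap ⟨(i : ℕ), by omega⟩ ⟨(i : ℕ) + 1, by omega⟩ from rfl, e2]
    exact braid_swap_rel (by simp only [ne_eq, Fin.mk_eq_mk]; omega)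
      (by simp only [ne_eq, Fin.mk_eq_mk]; omega) (by simp only [ne_eq, Fin.mk_eq_mk]; omega)
  · rw [map_commutatorElement]
    simp only [FreeGroup.lift_apply_of]
    rw [commutatorElement_eq_one_iff_commute]
    unfold swapGen
    exact swap_commute_of_ne (by simp only [ne_eq, Fin.mk_eq_mk]; omega)
      (by simp only [ne_eq, Fin.mk_eq_mk]; omega) (by simp only [ne_eq, Fin.mk_eq_mk]; omega)
      (by simp only [ne_eq, Fin.mk_eq_mk]; omega)

/-- The canonical projection `B_n → S_n` sending `σ_k` to the transposition `(k, k+1)`. -/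
def braidToPerm (n : ℕ) : BraidGroup n →* Equiv.Perm (Fin n) :=
  PresentedGroup.toGroup (f := swapGen n) (swapGen_rels n)

/-- The braid generator `σ_k` (`0`-indexed), or `1` if the index is out of range. -/
def sigmaN (n : ℕ) (k : ℕ) : BraidGroup n :=
  if h : k < n - 1 then PresentedGroup.of (⟨k, h⟩ : Fin (n - 1)) else 1

/-- The Artin pure braid generator `a_{ij}` (`0`-indexed), defined by
`a_{i,i+1} = σᵢ²` and `a_{i,j+1} = σⱼ a_{ij} σⱼ⁻¹`. -/
def aB (n : ℕ) (i : ℕ) : ℕ → BraidGroup n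
  | 0 => 1
  | j + 1 => if i = j then (sigmaN n i) ^ 2 else sigmaN n j * aB n i j * (sigmaN n j)⁻¹

/-- The pure braid group `P_n = ker (B_n → S_n)`. -/
abbrev pureKer (n : ℕ) : Subgroup (BraidGroup n) := MonoidHom.ker (braidToPerm n)


/-- The normal closure, in the pure braid group `P_n = ker p`, of the set of Artin generators
`a_{ij}` corresponding to non-edges of `Γ`; realized as the subgroup of `B_n` generated by all
`P_n`-conjugates of these generators. -/
def graphN {n : ℕ} (Γ : SimpleGraph (Fin n)) : Subgroup (BraidGroup n) :=
  Subgroup.closure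
    {x | ∃ g ∈ pureKer n, ∃ (i j : Fin n) (_ : i < j),
        ¬ Γ.Adj i j ∧ x = g * aB n (i : ℕ) (j : ℕ) * g⁻¹}

section ConjBy

variable {G : Type*} [Group G] (H : Subgroup G)

def IsConjBy (x y : G) : Prop := ∃ h ∈ H, x = h * y * h⁻¹

variable {H}

theorem IsConjBy.of_eq {x y : G} (hxy : x = y) : IsConjBy H x y :=
  ⟨1, H.one_mem, by simp [hxy]⟩

theorem IsConjBy.trans {x y z : G} (hxy : IsConjBy H x y) (hyz : IsConjBy H y z) :
    IsConjBy H x z := by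
  obtain ⟨g, hg, rfl⟩ := hxy
  obtain ⟨h, hh, rfl⟩ := hyz
  exact ⟨g * h, H.mul_mem hg hh, by group⟩

theorem IsConjBy.symm {x y : G} (hxy : IsConjBy H x y) : IsConjBy H y x := by
  obtain ⟨g, hg, rfl⟩ := hxy
  exact ⟨g⁻¹, H.inv_mem hg, by group⟩

theorem IsConjBy.conj [H.Normal] {x y : G} (hxy : IsConjBy H x y) (σ : G) :
    IsConjBy H (σ * x * σ⁻¹) (σ * y * σ⁻¹) := by
  obtain ⟨h, hh, rfl⟩ := hxy
  exact ⟨σ * h * σ⁻¹, ‹H.Normal›.conj_mem h hh σ, by group⟩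

theorem isConjBy_conj {g : G} (hg : g ∈ H) (x : G) : IsConjBy H (g * x * g⁻¹) x :=
  ⟨g, hg, rfl⟩

def conjEquivariant (H : Subgroup G) [H.Normal] {α : Type*} (f : G →* Equiv.Perm α)
    (a : α → α → G) : Subgroup G where
  carrier := {σ | ∀ i j, IsConjBy H (σ * a i j * σ⁻¹) (a (f σ i) (f σ j))}
  one_mem' i j := .of_eq (by simp)
  mul_mem' {σ τ} hσ hτ i j := by
    have h := ((hτ i j).conj σ).trans (hσ (f τ i) (f τ j))
    simpa [mul_assoc] using h
  inv_mem' {σ} hσ i j := by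
    have h := ((hσ ((f σ)⁻¹ i) ((f σ)⁻¹ j)).conj σ⁻¹).symm
    simpa [mul_assoc] using h

end ConjBy

section GroupIdentities

variable {G : Type*} [Group G] {a b : G}

theorem conj_conj_comm (h : Commute a b) (x : G) :
    a * (b * x * b⁻¹) * a⁻¹ = b * (a * x * a⁻¹) * b⁻¹ := by
  calc a * (b * x * b⁻¹) * a⁻¹ = (a * b) * x * (a * b)⁻¹ := by group
    _ = b * (a * x * a⁻¹) * b⁻¹ := by rw [h.eq]; group

theorem conj_conj_conj_of_braid (h : a * b * a = b * a * b) {x : G} (hbx : Commute b x) :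
    a * (b * (a * x * a⁻¹) * b⁻¹) * a⁻¹ = b * (a * x * a⁻¹) * b⁻¹ := by
  calc a * (b * (a * x * a⁻¹) * b⁻¹) * a⁻¹ = (a * b * a) * x * (a * b * a)⁻¹ := by group
    _ = b * a * (b * x) * (b⁻¹ * a⁻¹ * b⁻¹) := by rw [h]; group
    _ = b * (a * x * a⁻¹) * b⁻¹ := by rw [hbx.eq]; group

theorem conj_conj_sq_of_braid (h : a * b * a = b * a * b) :
    a * (b * a ^ 2 * b⁻¹) * a⁻¹ = b ^ 2 := by
  calc a * (b * a ^ 2 * b⁻¹) * a⁻¹ = (a * b * a) * (a * b⁻¹ * a⁻¹) := by rw [sq]; group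
    _ = b * a * b * (a * b⁻¹ * a⁻¹) := by rw [h]
    _ = b * (a * b * a) * (b⁻¹ * a⁻¹) := by group
    _ = b * (b * a * b) * (b⁻¹ * a⁻¹) := by rw [h]
    _ = b ^ 2 := by rw [sq]; group

theorem conj_sq_of_braid (h : a * b * a = b * a * b) :
    a * b ^ 2 * a⁻¹ = (b ^ 2)⁻¹ * (b * a ^ 2 * b⁻¹) * b ^ 2 := by
  calc a * b ^ 2 * a⁻¹ = b⁻¹ * (b * a * b) * b * a⁻¹ := by rw [sq]; group
    _ = b⁻¹ * (a * b * a) * b * a⁻¹ := by rw [h]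
    _ = b⁻¹ * a * (b * a * b) * a⁻¹ := by group
    _ = b⁻¹ * a * (a * b * a) * a⁻¹ := by rw [h]
    _ = (b ^ 2)⁻¹ * (b * a ^ 2 * b⁻¹) * b ^ 2 := by rw [sq, sq]; group

end GroupIdentities

section Braids

variable {n : ℕ}

theorem sigmaN_of (k : Fin (n - 1)) : sigmaN n k = PresentedGroup.of k :=
  dif_pos k.2

theorem sigmaN_of_le {k : ℕ} (hk : n - 1 ≤ k) : sigmaN n k = 1 :=
  dif_neg (by omega)

theorem braidToPerm_of (k : Fin (n - 1)) : braidToPerm n (PresentedGroup.of k) = swapGen n k :=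
  PresentedGroup.toGroup.of (swapGen_rels n)

theorem sigmaN_braid {k : ℕ} (hk : k + 2 ≤ n - 1) :
    sigmaN n k * sigmaN n (k + 1) * sigmaN n k =
      sigmaN n (k + 1) * sigmaN n k * sigmaN n (k + 1) := by
  rw [sigmaN_of ⟨k, by omega⟩, sigmaN_of ⟨k + 1, by omega⟩]
  exact PresentedGroup.mk_eq_mk_of_mul_inv_mem (Or.inl ⟨_, _, rfl, rfl⟩)

theorem sigmaN_commute_of_lt {k l : ℕ} (hkl : k + 2 ≤ l) :
    Commute (sigmaN n k) (sigmaN n l) := by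
  by_cases hl : l < n - 1
  · rw [sigmaN_of ⟨k, by omega⟩, sigmaN_of ⟨l, hl⟩, ← commutatorElement_eq_one_iff_commute]
    exact PresentedGroup.one_of_mem (Or.inr ⟨_, _, Or.inl hkl, rfl⟩)
  · rw [sigmaN_of_le (k := l) (by omega)]
    exact Commute.one_right _

theorem sigmaN_commute {k l : ℕ} (hkl : k + 2 ≤ l ∨ l + 2 ≤ k) :
    Commute (sigmaN n k) (sigmaN n l) :=
  hkl.elim sigmaN_commute_of_lt fun h ↦ (sigmaN_commute_of_lt h).symm

theorem sigmaN_sq_mem_pureKer (k : ℕ) : sigmaN n k ^ 2 ∈ pureKer n := by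
  by_cases hk : k < n - 1
  · rw [MonoidHom.mem_ker, sigmaN_of ⟨k, hk⟩, map_pow, braidToPerm_of, swapGen, sq,
      Equiv.swap_mul_self]
  · rw [sigmaN_of_le (by omega), one_pow]
    exact one_mem _

theorem aB_of_le {i j : ℕ} (hji : j ≤ i) : aB n i j = 1 := by
  induction j with
  | zero => rfl
  | succ j ih => rw [aB, if_neg (by omega), ih (by omega), mul_one, mul_inv_cancel]

theorem aB_succ_self (i : ℕ) : aB n i (i + 1) = sigmaN n i ^ 2 := by
  rw [aB, if_pos rfl]

theorem aB_succ_of_ne {i j : ℕ} (hij : i ≠ j) :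
    aB n i (j + 1) = sigmaN n j * aB n i j * (sigmaN n j)⁻¹ := by
  rw [aB, if_neg hij]

theorem aB_mem_pureKer (i j : ℕ) : aB n i j ∈ pureKer n := by
  induction j with
  | zero => exact one_mem _
  | succ j ih =>
    by_cases hij : i = j
    · rw [hij, aB_succ_self]
      exact sigmaN_sq_mem_pureKer j
    · rw [aB_succ_of_ne hij]
      exact (braidToPerm n).normal_ker.conj_mem _ ih _


theorem commute_sigmaN_aB_of_far {k i j : ℕ} (h : j + 1 ≤ k ∨ k + 2 ≤ i) :
    Commute (sigmaN n k) (aB n i j) := by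
  rcases le_or_gt j i with hji | hij
  · rw [aB_of_le hji]
    exact Commute.one_right _
  induction j, hij using Nat.le_induction with
  | base => rw [aB_succ_self]; exact (sigmaN_commute (by omega)).pow_right 2
  | succ j hij ih =>
    rw [aB_succ_of_ne (by omega)]
    have hkj : Commute (sigmaN n k) (sigmaN n j) := sigmaN_commute (by omega)
    exact (hkj.mul_right (ih (by omega))).mul_right hkj.inv_right

theorem commute_sigmaN_aB_of_between {k i j : ℕ} (hik : i + 1 ≤ k) (hkj : k + 2 ≤ j)
    (hj : j ≤ n - 1) : Commute (sigmaN n k) (aB n i j) := by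
  induction j, hkj using Nat.le_induction with
  | base =>
    rw [aB_succ_of_ne (by omega), aB_succ_of_ne (by omega)]
    apply mul_inv_eq_iff_eq_mul.mp
    exact conj_conj_conj_of_braid (sigmaN_braid (by omega))
      (commute_sigmaN_aB_of_far (Or.inl le_rfl))
  | succ j hkj ih =>
    rw [aB_succ_of_ne (by omega)]
    have hkj : Commute (sigmaN n k) (sigmaN n j) := sigmaN_commute (by omega)
    exact (hkj.mul_right (ih (by omega))).mul_right hkj.inv_right

theorem conj_sigmaN_aB_left {i j : ℕ} (hij : i + 2 ≤ j) (hj : j ≤ n - 1) :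
    sigmaN n i * aB n i j * (sigmaN n i)⁻¹ = aB n (i + 1) j := by
  induction j, hij using Nat.le_induction with
  | base =>
    rw [aB_succ_of_ne (by omega), aB_succ_self, aB_succ_self]
    exact conj_conj_sq_of_braid (sigmaN_braid (by omega))
  | succ j hij ih =>
    rw [aB_succ_of_ne (by omega), aB_succ_of_ne (by omega), ← ih (by omega)]
    exact conj_conj_comm (sigmaN_commute (by omega)) _

theorem conj_sigmaN_aB_succ_left {i j : ℕ} (hij : i + 2 ≤ j) (hj : j ≤ n - 1) :
    sigmaN n i * aB n (i + 1) j * (sigmaN n i)⁻¹ =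
      (aB n (i + 1) j)⁻¹ * aB n i j * aB n (i + 1) j := by
  induction j, hij using Nat.le_induction with
  | base =>
    rw [aB_succ_self (i + 1), aB_succ_of_ne (j := i + 1) (by omega), aB_succ_self]
    exact conj_sq_of_braid (sigmaN_braid (by omega))
  | succ j hij ih =>
    rw [aB_succ_of_ne (by omega), aB_succ_of_ne (by omega),
      conj_conj_comm (sigmaN_commute (by omega)), ih (by omega)]
    group

theorem conj_sigmaN_aB_succ_right {i j : ℕ} (hij : i ≠ j) :
    sigmaN n j * aB n i (j + 1) * (sigmaN n j)⁻¹ =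
      aB n j (j + 1) * aB n i j * (aB n j (j + 1))⁻¹ := by
  rw [aB_succ_of_ne hij, aB_succ_self, sq]
  group

end Braids

section Artin

variable {n : ℕ}

/-- `a_{ij}` made symmetric in `i, j`, so that a permutation can act on its indices without
reordering them. -/
def artin (n a b : ℕ) : BraidGroup n := aB n (min a b) (max a b)

theorem artin_comm (a b : ℕ) : artin n a b = artin n b a := by
  rw [artin, artin, min_comm, max_comm]

theorem artin_of_le {a b : ℕ} (hab : a ≤ b) : artin n a b = aB n a b := by
  rw [artin, min_eq_left hab, max_eq_right hab]

theorem artin_self (a : ℕ) : artin n a a = 1 := by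
  rw [artin_of_le le_rfl, aB_of_le le_rfl]

theorem isConjBy_conj_sigmaN_artin {k i j : ℕ} (hk : k < n - 1) (hi : i < n) (hj : j < n) :
    IsConjBy (pureKer n) (sigmaN n k * artin n i j * (sigmaN n k)⁻¹)
      (artin n (Equiv.swap k (k + 1) i) (Equiv.swap k (k + 1) j)) := by
  wlog hij : i ≤ j generalizing i j
  · have h := this hj hi (by omega)
    rwa [artin_comm j, artin_comm (Equiv.swap k (k + 1) j)] at h
  rcases hij.eq_or_lt with rfl | hij
  · exact .of_eq (by rw [artin_self, artin_self, mul_one, mul_inv_cancel])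
  rw [artin_of_le hij.le]
  obtain rfl | ⟨rfl, hik⟩ | ⟨rfl, rfl⟩ | ⟨rfl, hkj⟩ | rfl | hfar :
      j = k ∨ (j = k + 1 ∧ i < k) ∨ (i = k ∧ j = k + 1) ∨ (i = k ∧ k + 2 ≤ j) ∨ i = k + 1 ∨
        (j + 1 ≤ k ∨ k + 2 ≤ i ∨ (i + 1 ≤ k ∧ k + 2 ≤ j)) := by
    omega
  · rw [Equiv.swap_apply_of_ne_of_ne (by omega) (by omega), Equiv.swap_apply_left,
      artin_of_le (by omega)]
    exact .of_eq (aB_succ_of_ne (by omega)).symm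
  · rw [Equiv.swap_apply_of_ne_of_ne (by omega) (by omega), Equiv.swap_apply_right,
      artin_of_le hik.le, conj_sigmaN_aB_succ_right (by omega)]
    exact isConjBy_conj (aB_mem_pureKer _ _) _
  · rw [Equiv.swap_apply_left, Equiv.swap_apply_right, artin_comm, artin_of_le (by omega),
      aB_succ_self, ((Commute.refl _).pow_right 2).eq, mul_inv_cancel_right]
    exact .of_eq rfl
  · rw [Equiv.swap_apply_left, Equiv.swap_apply_of_ne_of_ne (by omega) (by omega),
      artin_of_le (by omega)]
    exact .of_eq (conj_sigmaN_aB_left hkj (by omega))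
  · rw [Equiv.swap_apply_right, Equiv.swap_apply_of_ne_of_ne (by omega) (by omega),
      artin_of_le (by omega), conj_sigmaN_aB_succ_left (by omega) (by omega)]
    simpa only [inv_inv] using isConjBy_conj (inv_mem (aB_mem_pureKer (k + 1) j)) (aB n k j)
  · rw [Equiv.swap_apply_of_ne_of_ne (by omega) (by omega),
      Equiv.swap_apply_of_ne_of_ne (by omega) (by omega), artin_of_le hij.le]
    have hcomm : Commute (sigmaN n k) (aB n i j) := by
      rcases hfar with h | h | h
      · exact commute_sigmaN_aB_of_far (Or.inl h)
      · exact commute_sigmaN_aB_of_far (Or.inr h)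
      · exact commute_sigmaN_aB_of_between h.1 h.2 (by omega)
    exact .of_eq (by rw [hcomm.eq, mul_inv_cancel_right])

theorem swapGen_apply_val (k : Fin (n - 1)) (x : Fin n) :
    (swapGen n k x : ℕ) = Equiv.swap (k : ℕ) (k + 1) x :=
  (Fin.val_injective.swap_apply _ _ x).symm

theorem of_mem_conjEquivariant_artin (k : Fin (n - 1)) :
    PresentedGroup.of k ∈
      conjEquivariant (pureKer n) (braidToPerm n) (fun i j : Fin n ↦ artin n i j) := by
  intro i j
  dsimp only
  rw [braidToPerm_of, swapGen_apply_val, swapGen_apply_val, ← sigmaN_of]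
  exact isConjBy_conj_sigmaN_artin k.2 i.2 j.2

theorem isConjBy_conj_artin (σ : BraidGroup n) (i j : Fin n) :
    IsConjBy (pureKer n) (σ * artin n i j * σ⁻¹)
      (artin n (braidToPerm n σ i) (braidToPerm n σ j)) :=
  PresentedGroup.generated_by _ _ of_mem_conjEquivariant_artin σ i j

end Artin

theorem _root_.SimpleGraph.adj_of_adj_apply {V : Type*} [Finite V] {G : SimpleGraph V}
    {s : Equiv.Perm V} (hs : ∀ i j, G.Adj i j → G.Adj (s i) (s j)) {i j : V}
    (h : G.Adj (s i) (s j)) : G.Adj i j := by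
  have hbij := ((Set.toFinite {p : V × V | G.Adj p.1 p.2}).injOn_iff_bijOn_of_mapsTo
    (f := Prod.map s s) fun p hp ↦ hs _ _ hp).mp (s.injective.prodMap s.injective).injOn
  obtain ⟨⟨a, b⟩, hab, heq⟩ := hbij.surjOn (show (s i, s j) ∈ _ from h)
  obtain ⟨rfl, rfl⟩ : a = i ∧ b = j := by simpa using heq
  exact hab

theorem mem_graphN_of_isConjBy {n : ℕ} {Γ : SimpleGraph (Fin n)} {x : BraidGroup n}
    {i j : Fin n} (hij : i ≠ j) (hΓ : ¬Γ.Adj i j) (hx : IsConjBy (pureKer n) x (artin n i j)) :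
    x ∈ graphN Γ := by
  wlog hlt : i < j generalizing i j
  · exact this hij.symm (fun h ↦ hΓ h.symm) (artin_comm (n := n) i j ▸ hx)
      (lt_of_le_of_ne (not_lt.mp hlt) hij.symm)
  obtain ⟨g, hg, rfl⟩ := hx
  rw [artin_of_le hlt.le]
  exact Subgroup.subset_closure ⟨g, hg, i, j, hlt, hΓ, rfl⟩

/-- The normal closure `N` of `{a_{ij} : {i,j} ∉ E_Γ}` in `P_n` is normalized
by every braid `σ ∈ B̃_Γ = p⁻¹(Aut Γ)`. -/
theorem graphN_normal_in_Btilde {n : ℕ} (Γ : SimpleGraph (Fin n)) (σ : BraidGroup n)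
    (hσ : ∀ i j : Fin n, Γ.Adj i j → Γ.Adj (braidToPerm n σ i) (braidToPerm n σ j)) :
    ∀ g ∈ graphN Γ, σ * g * σ⁻¹ ∈ graphN Γ := by
  suffices graphN Γ ≤ (graphN Γ).comap (MulAut.conj σ).toMonoidHom from fun g hg ↦ this hg
  refine (Subgroup.closure_le _).mpr ?_
  rintro _ ⟨g, hg, i, j, hij, hΓ, rfl⟩
  refine mem_graphN_of_isConjBy ((braidToPerm n σ).injective.ne hij.ne)
    (fun h ↦ hΓ (SimpleGraph.adj_of_adj_apply hσ h)) ?_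
  rw [← artin_of_le hij.le]
  exact ((isConjBy_conj hg _).conj σ).trans (isConjBy_conj_artin σ i j)

end GraphicBraid
end
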